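/- There is a universal constant δ ≥ 0 such that for every ε > 0 and every metric space (Γ, d) in which distinct points are at distance at least ε, the combinatorial horoball H(Γ) over Γ is δ'-hyperbolic for some δ' depending only on ε. That is, every geodesic triangle in H(Γ) is δ'-thin: each side is contained in the δ'-neighborhood of the union of the other two sides. -/

import Mathlib

open scoped ENNReal Classical

/-- The total length of a chain (finite path) of vertices, where consecutive
vertices are charged according to the edge-weight function `w`. -/
noncomputable def chainCost {V : Type*} (w : V → V → ℝ≥0∞) : List V → ℝ≥0∞
  | [] => 0
  | [_] => 0
  | u :: v :: l => w u v + chainCost w (v :: l)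

/-- The path metric of the weighted graph with edge-weight function `w`. -/
noncomputable def pathDist {V : Type*} (w : V → V → ℝ≥0∞) (u v : V) : ℝ≥0∞ :=
  ⨅ (l : List V) (_ : l.head? = some u) (_ : l.getLast? = some v), chainCost w l

/-- The edge weights of the combinatorial horoball over a metric space `Γ`:
vertical edges of length `1` between `(x,n)` and `(x,n+1)`, horizontal edges of
length `e^{-n}·d(x,y)` between `(x,n)` and `(y,n)` for `x ≠ y`. -/
noncomputable def horoballWeight (Γ : Type*) [MetricSpace Γ] :
    Γ × ℕ → Γ × ℕ → ℝ≥0∞ := fun p q =>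
  if p.1 = q.1 ∧ (q.2 = p.2 + 1 ∨ p.2 = q.2 + 1) then 1
  else if p.2 = q.2 ∧ p.1 ≠ q.1 then
    ENNReal.ofReal (Real.exp (-(p.2 : ℝ)) * dist p.1 q.1)
  else ⊤

/-! The horoball distance between `(x, m)` and `(y, n)` is, up to an additive constant,
`ψ = 2 log (d(x,y)/2 + e^{max(m,n)}) - m - n`: a path climbs to the level `K` where the
horizontal distance `e^{-K} d(x,y)` drops below `1`, crosses there and descends, while `ψ`
grows by at most the length of each edge. Writing `A(p,q) = d(x,y)/2 + e^{max(m,n)}`, the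
function `A` satisfies the triangle inequality, which forces the Ptolemy-type inequality
`A(p,q) A(r,s) ≤ 4 max (A(p,r) A(q,s), A(p,s) A(q,r))`; its logarithm is the four-point
condition for `ψ`, and hence for the horoball distance. -/

open Real

section PathDist

variable {V : Type*} {w : V → V → ℝ≥0∞}

lemma chainCost_append_cons (l₁ : List V) (v : V) (l₂ : List V) :
    chainCost w (l₁ ++ v :: l₂) = chainCost w (l₁ ++ [v]) + chainCost w (v :: l₂) := by
  induction l₁ with
  | nil => simp [chainCost]
  | cons a t ih =>
    cases t with
    | nil => simp [chainCost]
    | cons b t =>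
      simp only [List.cons_append, chainCost] at ih ⊢
      rw [ih, add_assoc]

lemma pathDist_le_chainCost {u v : V} (l : List V) (hu : l.head? = some u)
    (hv : l.getLast? = some v) : pathDist w u v ≤ chainCost w l :=
  iInf_le_of_le l (iInf_le_of_le hu (iInf_le _ hv))

@[simp]
lemma pathDist_self (v : V) : pathDist w v v = 0 :=
  nonpos_iff_eq_zero.1 (pathDist_le_chainCost [v] rfl rfl)

lemma pathDist_le_weight (u v : V) : pathDist w u v ≤ w u v :=
  (pathDist_le_chainCost [u, v] rfl rfl).trans_eq (add_zero _)

lemma pathDist_triangle (u v x : V) : pathDist w u x ≤ pathDist w u v + pathDist w v x := by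
  simp only [pathDist, ENNReal.iInf_add, ENNReal.add_iInf]
  refine le_iInf fun l₂ => le_iInf fun hv₂ => le_iInf fun hx => le_iInf fun l₁ =>
    le_iInf fun hu => le_iInf fun hv₁ => ?_
  obtain ⟨l₁, rfl⟩ := List.getLast?_eq_some_iff.1 hv₁
  obtain ⟨l₂, rfl⟩ := List.head?_eq_some_iff.1 hv₂
  rw [← chainCost_append_cons]
  refine pathDist_le_chainCost _ ?_ (by rwa [List.getLast?_append_cons])
  simpa [List.head?_append] using hu

lemma le_pathDist_of_le_add {f : V → V → ℝ≥0∞} (hf : ∀ v, f v v = 0)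
    (hstep : ∀ u v x, f u x ≤ w u v + f v x) (u v : V) : f u v ≤ pathDist w u v := by
  suffices h : ∀ l u, l.head? = some u → l.getLast? = some v → f u v ≤ chainCost w l from
    le_iInf fun l => le_iInf fun hu => le_iInf fun hv => h l u hu hv
  intro l
  induction l with
  | nil => simp
  | cons a t ih =>
    rintro u hu hv
    obtain rfl : a = u := by simpa using hu
    cases t with
    | nil =>
      obtain rfl : a = v := by simpa using hv
      simp [hf]
    | cons b t =>
      exact (hstep a b v).trans (add_le_add_right (ih b rfl (by simpa using hv)) _)

lemma add_le_max_add_of_le_of_le_add {ψ : V → V → ℝ} {D : V → V → ℝ≥0∞} {c k : ℝ}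
    (hk : 0 ≤ k) (hψ : ∀ u v, 0 ≤ ψ u v) (hlow : ∀ u v, ENNReal.ofReal (ψ u v) ≤ D u v)
    (hup : ∀ u v, D u v ≤ ENNReal.ofReal (ψ u v + k)) {p q r s : V}
    (h4 : ψ p q + ψ r s ≤ max (ψ p r + ψ q s) (ψ p s + ψ q r) + c) :
    D p q + D r s ≤ max (D p r + D q s) (D p s + D q r) + ENNReal.ofReal (c + 2 * k) := by
  have hpair : ∀ a b x y, ENNReal.ofReal (ψ a b + ψ x y) ≤ D a b + D x y := fun a b x y =>
    ENNReal.ofReal_add_le.trans (add_le_add (hlow a b) (hlow x y))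
  calc D p q + D r s ≤ ENNReal.ofReal (ψ p q + k) + ENNReal.ofReal (ψ r s + k) :=
        add_le_add (hup p q) (hup r s)
    _ = ENNReal.ofReal (ψ p q + ψ r s + 2 * k) := by
        rw [← ENNReal.ofReal_add (by linarith [hψ p q]) (by linarith [hψ r s])]
        ring_nf
    _ ≤ ENNReal.ofReal (max (ψ p r + ψ q s) (ψ p s + ψ q r) + (c + 2 * k)) :=
        ENNReal.ofReal_le_ofReal (by linarith)
    _ ≤ max (D p r + D q s) (D p s + D q r) + ENNReal.ofReal (c + 2 * k) := by
        refine ENNReal.ofReal_add_le.trans (add_le_add_left ?_ _)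
        rw [ENNReal.ofReal_max]
        exact max_le_max (hpair p r q s) (hpair p s q r)

end PathDist

lemma mul_le_four_mul_max_of_le_add {x y a b c e : ℝ} (hy : 0 ≤ y)
    (ha : 0 ≤ a) (hb : 0 ≤ b) (hc : 0 ≤ c) (he : 0 ≤ e)
    (hx₁ : x ≤ a + e) (hx₂ : x ≤ c + b) (hy₁ : y ≤ a + c) (hy₂ : y ≤ e + b) :
    x * y ≤ 4 * max (a * b) (c * e) := by
  have bound : ∀ U W, 0 ≤ U → x ≤ 2 * U → y ≤ 2 * W → x * y ≤ 4 * (U * W) :=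
    fun U W hU hxU hyW => by nlinarith [mul_le_mul hxU hyW hy (by linarith)]
  -- the smallest of `a, b, c, e` decides which product dominates
  rcases le_total (min a b) (min c e) with h | h
  · have hce : x * y ≤ 4 * (c * e) := by
      rcases le_total a b with hab | hab
      · rw [min_eq_left hab, le_min_iff] at h
        exact (bound e c he (by linarith) (by linarith)).trans_eq (by ring)
      · rw [min_eq_right hab, le_min_iff] at h
        exact bound c e hc (by linarith) (by linarith)
    exact hce.trans (mul_le_mul_of_nonneg_left (le_max_right _ _) (by norm_num))
  · have hab : x * y ≤ 4 * (a * b) := by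
      rcases le_total c e with hce | hce
      · rw [min_eq_left hce, le_min_iff] at h
        exact (bound b a hb (by linarith) (by linarith)).trans_eq (by ring)
      · rw [min_eq_right hce, le_min_iff] at h
        exact bound a b ha (by linarith) (by linarith)
    exact hab.trans (mul_le_mul_of_nonneg_left (le_max_left _ _) (by norm_num))

lemma exists_nat_two_mul_add_mul_exp_neg_le {t : ℝ} (ht : 0 ≤ t) :
    ∃ j : ℕ, 2 * j + t * exp (-j) ≤ 2 * log (1 + t / 2) + 5 := by
  refine ⟨⌈log (1 + t)⌉₊, ?_⟩
  set j := ⌈log (1 + t)⌉₊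
  have hj : (j : ℝ) < log (1 + t) + 1 := Nat.ceil_lt_add_one (log_nonneg (by linarith))
  have hexp : t * exp (-j) ≤ 1 := by
    have : exp (-j) ≤ (1 + t)⁻¹ := by
      rw [← exp_log (by linarith : 0 < 1 + t), ← exp_neg]
      exact exp_le_exp.2 (neg_le_neg (Nat.le_ceil _))
    calc t * exp (-j) ≤ t * (1 + t)⁻¹ := by gcongr
      _ ≤ 1 := by rw [← div_eq_mul_inv]; exact div_le_one_of_le₀ (by linarith) (by linarith)
  have hlog : log (1 + t) ≤ log 2 + log (1 + t / 2) := by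
    rw [← log_mul two_ne_zero (by positivity)]
    exact log_le_log (by linarith) (by linarith)
  have hlog2 : log 2 ≤ 1 := by linarith [log_le_sub_one_of_pos (two_pos : (0 : ℝ) < 2)]
  linarith

section Horoball

variable {Γ : Type*} [MetricSpace Γ]

lemma horoballWeight_self_succ (x : Γ) (n : ℕ) : horoballWeight Γ (x, n) (x, n + 1) = 1 := by
  simp [horoballWeight]

lemma horoballWeight_succ_self (x : Γ) (n : ℕ) : horoballWeight Γ (x, n + 1) (x, n) = 1 := by
  simp [horoballWeight]

lemma horoballWeight_of_ne {x y : Γ} (h : x ≠ y) (n : ℕ) :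
    horoballWeight Γ (x, n) (y, n) = ENNReal.ofReal (exp (-n) * dist x y) := by
  simp [horoballWeight, h]

lemma pathDist_horoball_up_le (x : Γ) (m i : ℕ) :
    pathDist (horoballWeight Γ) (x, m) (x, m + i) ≤ i := by
  induction i with
  | zero => simp
  | succ i ih =>
    calc pathDist (horoballWeight Γ) (x, m) (x, m + (i + 1))
        ≤ pathDist (horoballWeight Γ) (x, m) (x, m + i)
          + pathDist (horoballWeight Γ) (x, m + i) (x, m + i + 1) := pathDist_triangle _ _ _
      _ ≤ i + 1 :=
        add_le_add ih ((pathDist_le_weight _ _).trans_eq (horoballWeight_self_succ _ _))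
      _ = (i + 1 : ℕ) := by push_cast; rfl

lemma pathDist_horoball_down_le (x : Γ) (n j : ℕ) :
    pathDist (horoballWeight Γ) (x, n + j) (x, n) ≤ j := by
  induction j with
  | zero => simp
  | succ j ih =>
    calc pathDist (horoballWeight Γ) (x, n + (j + 1)) (x, n)
        ≤ pathDist (horoballWeight Γ) (x, n + j + 1) (x, n + j)
          + pathDist (horoballWeight Γ) (x, n + j) (x, n) := pathDist_triangle _ _ _
      _ ≤ 1 + j :=
        add_le_add ((pathDist_le_weight _ _).trans_eq (horoballWeight_succ_self _ _)) ih
      _ = (j + 1 : ℕ) := by push_cast; rw [add_comm]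

lemma pathDist_horoball_level_le (x y : Γ) (n : ℕ) :
    pathDist (horoballWeight Γ) (x, n) (y, n) ≤ ENNReal.ofReal (exp (-n) * dist x y) := by
  by_cases h : x = y
  · simp [h]
  · exact (pathDist_le_weight _ _).trans_eq (horoballWeight_of_ne h n)

lemma pathDist_horoball_le (x y : Γ) {m n i j : ℕ} (h : m + i = n + j) :
    pathDist (horoballWeight Γ) (x, m) (y, n) ≤
      ENNReal.ofReal (i + exp (-(m + i : ℕ)) * dist x y + j) := by
  calc pathDist (horoballWeight Γ) (x, m) (y, n)
      ≤ pathDist (horoballWeight Γ) (x, m) (x, m + i)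
        + (pathDist (horoballWeight Γ) (x, m + i) (y, m + i)
          + pathDist (horoballWeight Γ) (y, n + j) (y, n)) := by
        rw [← h]
        exact (pathDist_triangle _ _ _).trans (add_le_add_right (pathDist_triangle _ _ _) _)
    _ ≤ i + (ENNReal.ofReal (exp (-(m + i : ℕ)) * dist x y) + j) :=
        add_le_add (pathDist_horoball_up_le x m i)
          (add_le_add (pathDist_horoball_level_le x y _) (pathDist_horoball_down_le y n j))
    _ = ENNReal.ofReal (i + exp (-(m + i : ℕ)) * dist x y + j) := by
        rw [ENNReal.ofReal_add (by positivity) (by positivity),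
          ENNReal.ofReal_add (by positivity) (by positivity), ENNReal.ofReal_natCast,
          ENNReal.ofReal_natCast, add_assoc]

noncomputable def horoballScale (p q : Γ × ℕ) : ℝ :=
  dist p.1 q.1 / 2 + exp (max (p.2 : ℝ) q.2)

noncomputable def horoballEstimate (p q : Γ × ℕ) : ℝ :=
  2 * log (horoballScale p q) - p.2 - q.2

lemma exp_max_le_horoballScale (p q : Γ × ℕ) :
    exp (max (p.2 : ℝ) q.2) ≤ horoballScale p q :=
  le_add_of_nonneg_left (by positivity)

lemma horoballScale_pos (p q : Γ × ℕ) : 0 < horoballScale p q :=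
  (exp_pos _).trans_le (exp_max_le_horoballScale p q)

lemma horoballScale_comm (p q : Γ × ℕ) : horoballScale p q = horoballScale q p := by
  rw [horoballScale, horoballScale, dist_comm, max_comm]

lemma horoballScale_triangle (p r q : Γ × ℕ) :
    horoballScale p q ≤ horoballScale p r + horoballScale r q := by
  have hmax : max (p.2 : ℝ) q.2 ≤ max (max (p.2 : ℝ) r.2) (max (r.2 : ℝ) q.2) :=
    max_le (le_max_of_le_left (le_max_left _ _)) (le_max_of_le_right (le_max_right _ _))
  have hexp : exp (max (p.2 : ℝ) q.2) ≤ exp (max (p.2 : ℝ) r.2) + exp (max (r.2 : ℝ) q.2) :=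
    calc exp (max (p.2 : ℝ) q.2) ≤ exp (max (max (p.2 : ℝ) r.2) (max (r.2 : ℝ) q.2)) :=
          exp_le_exp.2 hmax
      _ = max (exp (max (p.2 : ℝ) r.2)) (exp (max (r.2 : ℝ) q.2)) := exp_monotone.map_max
      _ ≤ exp (max (p.2 : ℝ) r.2) + exp (max (r.2 : ℝ) q.2) :=
          max_le_add_of_nonneg (exp_pos _).le (exp_pos _).le
  unfold horoballScale
  linarith [dist_triangle p.1 r.1 q.1]

lemma horoballEstimate_nonneg (p q : Γ × ℕ) : 0 ≤ horoballEstimate p q := by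
  have h := log_le_log (exp_pos _) (exp_max_le_horoballScale p q)
  rw [log_exp] at h
  unfold horoballEstimate
  linarith [le_max_left (p.2 : ℝ) q.2, le_max_right (p.2 : ℝ) q.2]

lemma horoballEstimate_self (p : Γ × ℕ) : horoballEstimate p p = 0 := by
  rw [horoballEstimate, horoballScale, dist_self, zero_div, zero_add, max_self, log_exp]
  ring

lemma horoballEstimate_eq (x y : Γ) (m n : ℕ) :
    horoballEstimate (x, m) (y, n) =
      2 * max (m : ℝ) n - m - n + 2 * log (1 + exp (-max (m : ℝ) n) * dist x y / 2) := by
  have hscale : horoballScale (x, m) (y, n) =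
      exp (max (m : ℝ) n) * (1 + exp (-max (m : ℝ) n) * dist x y / 2) := by
    rw [horoballScale, mul_add, ← mul_div_assoc, ← mul_assoc, ← exp_add]
    simp only [add_neg_cancel, exp_zero]
    ring
  rw [horoballEstimate, hscale, log_mul (exp_ne_zero _) (by positivity), log_exp]
  ring

lemma horoballEstimate_vertical_le (x : Γ) (a b : ℕ) (q : Γ × ℕ) :
    horoballEstimate (x, a) q ≤ |(a : ℝ) - b| + horoballEstimate (x, b) q := by
  set t := max ((a : ℝ) - b) 0
  have hscale : horoballScale (x, a) q ≤ exp t * horoballScale (x, b) q := by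
    have hmax : max (a : ℝ) q.2 ≤ t + max (b : ℝ) q.2 := by
      refine max_le ?_ ?_
      · linarith [le_max_left ((a : ℝ) - b) 0, le_max_left (b : ℝ) q.2]
      · linarith [le_max_right ((a : ℝ) - b) 0, le_max_right (b : ℝ) q.2]
    have hexp : exp (max (a : ℝ) q.2) ≤ exp t * exp (max (b : ℝ) q.2) := by
      rw [← exp_add]
      exact exp_le_exp.2 hmax
    have hd : dist x q.1 / 2 ≤ exp t * (dist x q.1 / 2) :=
      le_mul_of_one_le_left (by positivity) (one_le_exp (le_max_right _ _))
    simp only [horoballScale, mul_add]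
    linarith
  have hlog : log (horoballScale (x, a) q) ≤ t + log (horoballScale (x, b) q) := by
    rw [← log_exp t, ← log_mul (exp_ne_zero _) (horoballScale_pos _ _).ne']
    exact log_le_log (horoballScale_pos _ _) hscale
  have habs : 2 * t - (a - b) = |(a : ℝ) - b| := by
    rcases le_total ((a : ℝ) - b) 0 with h | h
    · rw [show t = 0 from max_eq_right h, abs_of_nonpos h]; ring
    · rw [show t = (a : ℝ) - b from max_eq_left h, abs_of_nonneg h]; ring
  unfold horoballEstimate
  simp only at habs ⊢
  linarith

lemma horoballEstimate_horizontal_le (x y : Γ) (n : ℕ) (q : Γ × ℕ) :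
    horoballEstimate (x, n) q ≤ exp (-n) * dist x y + horoballEstimate (y, n) q := by
  set A := horoballScale (y, n) q
  have hA : 0 < A := horoballScale_pos _ _
  have hscale : horoballScale (x, n) q ≤ A + dist x y / 2 := by
    simp only [A, horoballScale]
    linarith [dist_triangle x y q.1]
  have hlog : log (A + dist x y / 2) ≤ log A + dist x y / 2 / A := by
    have h := log_le_sub_one_of_pos (by positivity : 0 < (A + dist x y / 2) / A)
    rw [log_div (by positivity) hA.ne', add_div, div_self hA.ne'] at h
    linarith
  have hdiv : dist x y / 2 / A ≤ exp (-n) * dist x y / 2 := by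
    rw [exp_neg, inv_mul_eq_div, div_right_comm]
    gcongr
    exact (exp_le_exp.2 (le_max_left _ _)).trans (exp_max_le_horoballScale (y, n) q)
  have := log_le_log (horoballScale_pos _ _) hscale
  unfold horoballEstimate
  simp only at this ⊢
  linarith

lemma ofReal_horoballEstimate_le_weight_add (p r q : Γ × ℕ) :
    ENNReal.ofReal (horoballEstimate p q) ≤
      horoballWeight Γ p r + ENNReal.ofReal (horoballEstimate r q) := by
  obtain ⟨x, a⟩ := p
  obtain ⟨y, b⟩ := r
  unfold horoballWeight
  split_ifs with hvert hhor
  · obtain ⟨rfl, hab⟩ := hvert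
    simp only at hab
    have hone : |(a : ℝ) - b| = 1 := by
      rcases hab with rfl | rfl <;> push_cast <;> simp
    rw [← ENNReal.ofReal_one, ← ENNReal.ofReal_add zero_le_one (horoballEstimate_nonneg _ _)]
    exact ENNReal.ofReal_le_ofReal (hone ▸ horoballEstimate_vertical_le x a b q)
  · obtain ⟨rfl, -⟩ := hhor
    rw [← ENNReal.ofReal_add (by positivity) (horoballEstimate_nonneg _ _)]
    exact ENNReal.ofReal_le_ofReal (horoballEstimate_horizontal_le x y a q)
  · simp

lemma ofReal_horoballEstimate_le_pathDist (p q : Γ × ℕ) :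
    ENNReal.ofReal (horoballEstimate p q) ≤ pathDist (horoballWeight Γ) p q :=
  le_pathDist_of_le_add (f := fun u v => ENNReal.ofReal (horoballEstimate u v))
    (fun v => by rw [horoballEstimate_self, ENNReal.ofReal_zero])
    ofReal_horoballEstimate_le_weight_add p q

lemma pathDist_le_ofReal_horoballEstimate_add (p q : Γ × ℕ) :
    pathDist (horoballWeight Γ) p q ≤ ENNReal.ofReal (horoballEstimate p q + 5) := by
  obtain ⟨x, m⟩ := p
  obtain ⟨y, n⟩ := q
  set μ := max m n
  have hμ : (μ : ℝ) = max (m : ℝ) n := Nat.cast_max m n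
  obtain ⟨j, hj⟩ := exists_nat_two_mul_add_mul_exp_neg_le
    (by positivity : 0 ≤ exp (-(μ : ℝ)) * dist x y)
  obtain ⟨i, hi⟩ : ∃ i, m + i = μ + j := ⟨μ + j - m, by omega⟩
  obtain ⟨i', hi'⟩ : ∃ i', n + i' = μ + j := ⟨μ + j - n, by omega⟩
  refine (pathDist_horoball_le x y (hi.trans hi'.symm)).trans (ENNReal.ofReal_le_ofReal ?_)
  have hi_real : (m : ℝ) + i = μ + j := by exact_mod_cast hi
  have hi'_real : (n : ℝ) + i' = μ + j := by exact_mod_cast hi'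
  have hexp : exp (-(μ + j : ℕ)) * dist x y = exp (-(μ : ℝ)) * dist x y * exp (-j) := by
    rw [mul_right_comm, ← exp_add]
    push_cast
    ring_nf
  rw [horoballEstimate_eq, hi, hexp, ← hμ]
  linarith

lemma horoballEstimate_four_point (p q r s : Γ × ℕ) :
    horoballEstimate p q + horoballEstimate r s ≤
      max (horoballEstimate p r + horoballEstimate q s)
        (horoballEstimate p s + horoballEstimate q r) + 2 * log 4 := by
  have hA : ∀ u v : Γ × ℕ, 0 < horoballScale u v := horoballScale_pos
  have htri : ∀ u v w : Γ × ℕ, horoballScale u w ≤ horoballScale u v + horoballScale w v :=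
    fun u v w => horoballScale_comm w v ▸ horoballScale_triangle u v w
  have htri' : ∀ u v w : Γ × ℕ, horoballScale u w ≤ horoballScale v u + horoballScale v w :=
    fun u v w => horoballScale_comm u v ▸ horoballScale_triangle u v w
  set A := horoballScale (Γ := Γ)
  have hprod : A p q * A r s ≤ 4 * max (A p r * A q s) (A p s * A q r) :=
    mul_le_four_mul_max_of_le_add (hA _ _).le (hA _ _).le (hA _ _).le (hA _ _).le
      (hA _ _).le (htri p r q) (htri p s q) (htri' r p s) (htri' r q s)
  have hlog := log_le_log (mul_pos (hA p q) (hA r s)) hprod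
  rw [log_mul (hA _ _).ne' (hA _ _).ne',
    log_mul (by norm_num) (lt_max_of_lt_left (mul_pos (hA p r) (hA q s))).ne'] at hlog
  unfold horoballEstimate
  rcases le_total (A p r * A q s) (A p s * A q r) with h | h
  · rw [max_eq_right h, log_mul (hA _ _).ne' (hA _ _).ne'] at hlog
    exact (by linarith : _ ≤ _).trans (add_le_add_left (le_max_right _ _) _)
  · rw [max_eq_left h, log_mul (hA _ _).ne' (hA _ _).ne'] at hlog
    exact (by linarith : _ ≤ _).trans (add_le_add_left (le_max_left _ _) _)

end Horoball

/-- for every `ε > 0` there is `δ' ≥ 0`, depending only on `ε`,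
such that for every `ε`-separated metric space `Γ` the combinatorial horoball
`H(Γ)` is `δ'`-hyperbolic (expressed via Gromov's four-point condition on the
path metric of `H(Γ)`). -/
theorem horoball_hyperbolic :
    ∀ ε : ℝ, 0 < ε → ∃ δ' : ℝ, 0 ≤ δ' ∧
      ∀ (Γ : Type) [inst : MetricSpace Γ],
        (∀ x y : Γ, x ≠ y → ε ≤ dist x y) →
        ∀ p q r s : Γ × ℕ,
          pathDist (horoballWeight Γ) p q + pathDist (horoballWeight Γ) r s ≤
            max (pathDist (horoballWeight Γ) p r + pathDist (horoballWeight Γ) q s)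
              (pathDist (horoballWeight Γ) p s + pathDist (horoballWeight Γ) q r) +
              ENNReal.ofReal (2 * δ') := by
  intro ε _
  refine ⟨log 4 + 5, by positivity, fun Γ _ _ p q r s => ?_⟩
  rw [show 2 * (log 4 + 5) = 2 * log 4 + 2 * 5 by ring]
  exact add_le_max_add_of_le_of_le_add (by norm_num) horoballEstimate_nonneg
    ofReal_horoballEstimate_le_pathDist pathDist_le_ofReal_horoballEstimate_add
    (horoballEstimate_four_point p q r s)
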